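/- arXiv:2406.19303 — 4 statements merged into one kernel-verified Lean document; each statement's English description precedes it below -/
import Mathlib

section
/- Let n ≥ 2 and let i be an even integer with 2 ≤ i ≤ n. Then, as maps ℝ^n → ℝ^n, (s_0 ∘ [2,n] ∘ [1,n])^{i/2} ∘ [n−i, n−1] ∘ [n−i−1, n−2] ∘ ⋯ ∘ [1, i] = t_{e_1+e_2+⋯+e_i}, where the trailing product consists of the blocks [k, k+i−1] for k = n−i, n−i−1, …, 1 (this trailing product is empty, i.e. the identity map, when i = n). In other words, the element ω_i = (s_0[2,n][1,n])^{i/2}[n−i,n−1]⋯[1,i] of the extended affine Weyl group of type B_n^{(1)} acts on ℝ^n as translation by e_1+⋯+e_i. -/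
noncomputable section

/-- Value of `x : ℝ^n` at the natural (0-indexed) index `m`, or `0` if out of range. -/
def xval {n : ℕ} (x : Fin n → ℝ) (m : ℕ) : ℝ := if h : m < n then x ⟨m, h⟩ else 0

/-- The simple affine reflections of type `B_n^{(1)}` acting on `ℝ^n`:
for `1 ≤ j ≤ n-1`, `sB n j` swaps the `j`-th and `(j+1)`-th coordinates (1-indexed);
`sB n n` negates the last coordinate; `sB n 0` is `x ↦ (1 - x₂, 1 - x₁, x₃, …, xₙ)`. -/
def sB (n : ℕ) (j : ℕ) (x : Fin n → ℝ) (k : Fin n) : ℝ :=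
  if j = 0 then
    if (k : ℕ) = 0 then 1 - xval x 1
    else if (k : ℕ) = 1 then 1 - xval x 0
    else x k
  else if j = n then
    if (k : ℕ) = n - 1 then -x k else x k
  else
    if (k : ℕ) = j - 1 then xval x j
    else if (k : ℕ) = j then xval x (j - 1)
    else x k

/-- The block `[k,l] = s_k ∘ s_{k+1} ∘ ⋯ ∘ s_l` (rightmost factor applied first). -/
def blkB (n k l : ℕ) : (Fin n → ℝ) → (Fin n → ℝ) :=
  (List.range' k (l + 1 - k)).foldr (fun j f => sB n j ∘ f) id

/-- The trailing product `[n−i,n−1] ∘ [n−i−1,n−2] ∘ ⋯ ∘ [1,i]`,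
consisting of the blocks `[k, k+i−1]` for `k = n−i, n−i−1, …, 1`. -/
def trailB (n i : ℕ) : (Fin n → ℝ) → (Fin n → ℝ) :=
  ((List.range' 1 (n - i)).reverse).foldr (fun m f => blkB n m (m + i - 1) ∘ f) id

lemma xval_lt {n : ℕ} (x : Fin n → ℝ) {m : ℕ} (h : m < n) : xval x m = x ⟨m, h⟩ := dif_pos h

lemma xval_val {n : ℕ} (x : Fin n → ℝ) (j : Fin n) : xval x (j : ℕ) = x j := by
  rw [xval_lt x j.isLt]

lemma sB_mid {n j : ℕ} (hj1 : 1 ≤ j) (hjn : j < n) (x : Fin n → ℝ) (k : Fin n) :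
    sB n j x k = if (k:ℕ) = j - 1 then xval x j
      else if (k:ℕ) = j then xval x (j-1) else x k := by
  have h0 : j ≠ 0 := by omega
  have h1 : j ≠ n := by omega
  simp [sB, h0, h1]

lemma sB_top {n : ℕ} (hn : 1 ≤ n) (x : Fin n → ℝ) (k : Fin n) :
    sB n n x k = if (k:ℕ) = n - 1 then -x k else x k := by
  have h0 : n ≠ 0 := by omega
  simp [sB, h0]

lemma blkB_nil {n k l : ℕ} (h : l < k) : blkB n k l = id := by
  have : l + 1 - k = 0 := by omega
  simp [blkB, this]

lemma blkB_cons {n k l : ℕ} (h : k ≤ l) : blkB n k l = sB n k ∘ blkB n (k+1) l := by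
  have h1 : l + 1 - k = (l - k) + 1 := by omega
  have h2 : l + 1 - (k+1) = l - k := by omega
  rw [blkB, blkB, h1, h2, List.range'_succ]
  simp

theorem blk_mid {n : ℕ} (k l : ℕ) (hk : 1 ≤ k) (hkl : k ≤ l) (hl : l < n) (x : Fin n → ℝ)
    (j : Fin n) :
    blkB n k l x j = if (j:ℕ) = k - 1 then xval x l
      else if k ≤ (j:ℕ) ∧ (j:ℕ) ≤ l then xval x ((j:ℕ) - 1) else x j := by
  rcases eq_or_lt_of_le hkl with rfl | hlt
  · rw [blkB_cons le_rfl, blkB_nil (by omega)]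
    simp only [Function.comp_apply, id_eq]
    rw [sB_mid hk hl]
    rcases lt_trichotomy ((j:ℕ)) k with h | h | h
    · rcases eq_or_lt_of_le (Nat.lt_iff_add_one_le.mp h) with h' | h'
      · simp [show (j:ℕ) = k - 1 by omega]
      · have e1 : ¬ ((j:ℕ) = k - 1) := by omega
        have e2 : ¬ ((j:ℕ) = k) := by omega
        simp [e1, e2, show ¬ (k ≤ (j:ℕ) ∧ (j:ℕ) ≤ k) by omega]
    · have e1 : ¬ ((j:ℕ) = k - 1) := by omega
      rw [if_neg e1, if_pos h, if_neg e1, if_pos (show k ≤ (j:ℕ) ∧ (j:ℕ) ≤ k by omega)]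
      congr 1
      omega
    · have e1 : ¬ ((j:ℕ) = k - 1) := by omega
      have e2 : ¬ ((j:ℕ) = k) := by omega
      simp [e1, e2, show ¬ (k ≤ (j:ℕ) ∧ (j:ℕ) ≤ k) by omega]
  · rw [blkB_cons hkl]
    simp only [Function.comp_apply]
    rw [sB_mid hk (by omega)]
    have hkn : k < n := by omega
    have hk1n : k - 1 < n := by omega
    have ihk := blk_mid (k+1) l (by omega) hlt hl x ⟨k, hkn⟩
    have ihk1 := blk_mid (k+1) l (by omega) hlt hl x ⟨k-1, hk1n⟩
    have ihj := blk_mid (k+1) l (by omega) hlt hl x j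
    have hyk : xval (blkB n (k+1) l x) k = xval x l := by
      rw [xval_lt _ hkn, ihk]
      simp
    have hyk1 : xval (blkB n (k+1) l x) (k-1) = x ⟨k-1, hk1n⟩ := by
      rw [xval_lt _ hk1n, ihk1]
      have a1 : ¬ ((k-1 : ℕ) = k+1-1) := by omega
      have a2 : ¬ (k+1 ≤ (k-1:ℕ) ∧ (k-1:ℕ) ≤ l) := by omega
      simp only [Fin.val_mk]
      rw [if_neg a1, if_neg a2]
    rcases lt_trichotomy ((j:ℕ)) k with h | h | h
    · have e2 : ¬ ((j:ℕ) = k) := by omega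
      by_cases e1 : (j:ℕ) = k - 1
      · rw [if_pos e1, if_pos e1, hyk]
      · rw [if_neg e1, if_neg e2, if_neg e1, ihj,
          if_neg (show ¬ ((j:ℕ) = k + 1 - 1) by omega),
          if_neg (show ¬ (k+1 ≤ (j:ℕ) ∧ (j:ℕ) ≤ l) by omega),
          if_neg (show ¬ (k ≤ (j:ℕ) ∧ (j:ℕ) ≤ l) by omega)]
    · have e1 : ¬ ((j:ℕ) = k-1) := by omega
      rw [if_neg e1, if_pos h, hyk1, if_neg e1,
        if_pos (show k ≤ (j:ℕ) ∧ (j:ℕ) ≤ l by omega),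
        xval_lt x (show (j:ℕ)-1 < n by omega)]
      exact congrArg x (Fin.ext (by simp; omega))
    · rw [if_neg (show ¬ ((j:ℕ) = k-1) by omega), if_neg (show ¬ ((j:ℕ) = k) by omega), ihj,
        if_neg (show ¬ ((j:ℕ) = k+1-1) by omega)]
      by_cases hle : (j:ℕ) ≤ l
      · rw [if_pos (show k+1 ≤ (j:ℕ) ∧ (j:ℕ) ≤ l by omega),
          if_pos (show k ≤ (j:ℕ) ∧ (j:ℕ) ≤ l by omega),
          if_neg (show ¬ ((j:ℕ) = k-1) by omega)]
      · rw [if_neg (show ¬ (k+1 ≤ (j:ℕ) ∧ (j:ℕ) ≤ l) by omega),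
          if_neg (show ¬ (k ≤ (j:ℕ) ∧ (j:ℕ) ≤ l) by omega),
          if_neg (show ¬ ((j:ℕ) = k-1) by omega)]
termination_by l - k


theorem blk_top {n : ℕ} (k : ℕ) (hk : 1 ≤ k) (hkn : k ≤ n) (x : Fin n → ℝ) (j : Fin n) :
    blkB n k n x j = if (j:ℕ) = k - 1 then -(xval x (n-1))
      else if k ≤ (j:ℕ) then xval x ((j:ℕ) - 1) else x j := by
  have hjn := j.isLt
  rcases eq_or_lt_of_le hkn with rfl | hlt
  · rw [blkB_cons le_rfl, blkB_nil (by omega)]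
    simp only [Function.comp_apply, id_eq]
    rw [sB_top hk]
    by_cases h : (j:ℕ) = k - 1
    · rw [if_pos h, if_pos h]
      congr 1
      rw [xval_lt x (show k-1 < k by omega)]
      exact congrArg x (Fin.ext (by simp; omega))
    · rw [if_neg h, if_neg h, if_neg (show ¬ (k ≤ (j:ℕ)) by omega)]
  · rw [blkB_cons (by omega)]
    simp only [Function.comp_apply]
    rw [sB_mid hk hlt]
    have hkltn : k < n := hlt
    have hk1n : k - 1 < n := by omega
    have ihk := blk_top (k+1) (by omega) (by omega) x (⟨k, hkltn⟩ : Fin n)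
    have ihk1 := blk_top (k+1) (by omega) (by omega) x (⟨k-1, hk1n⟩ : Fin n)
    have ihj := blk_top (k+1) (by omega) (by omega) x j
    have hyk : xval (blkB n (k+1) n x) k = -(xval x (n-1)) := by
      rw [xval_lt _ hkltn, ihk]
      simp
    have hyk1 : xval (blkB n (k+1) n x) (k-1) = x ⟨k-1, hk1n⟩ := by
      rw [xval_lt _ hk1n, ihk1]
      simp only [Fin.val_mk]
      rw [if_neg (show ¬ ((k-1:ℕ) = k+1-1) by omega),
        if_neg (show ¬ (k+1 ≤ (k-1:ℕ)) by omega)]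
    rcases lt_trichotomy ((j:ℕ)) k with h | h | h
    · have e2 : ¬ ((j:ℕ) = k) := by omega
      by_cases e1 : (j:ℕ) = k - 1
      · rw [if_pos e1, if_pos e1, hyk]
      · rw [if_neg e1, if_neg e2, if_neg e1, ihj,
          if_neg (show ¬ ((j:ℕ) = k + 1 - 1) by omega),
          if_neg (show ¬ (k+1 ≤ (j:ℕ)) by omega),
          if_neg (show ¬ (k ≤ (j:ℕ)) by omega)]
    · have e1 : ¬ ((j:ℕ) = k-1) := by omega
      rw [if_neg e1, if_pos h, hyk1, if_neg e1, if_pos (show k ≤ (j:ℕ) by omega),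
        xval_lt x (show (j:ℕ)-1 < n by omega)]
      exact congrArg x (Fin.ext (by simp; omega))
    · rw [if_neg (show ¬ ((j:ℕ) = k-1) by omega), if_neg (show ¬ ((j:ℕ) = k) by omega), ihj,
        if_neg (show ¬ ((j:ℕ) = k+1-1) by omega),
        if_pos (show k+1 ≤ (j:ℕ) by omega),
        if_pos (show k ≤ (j:ℕ) by omega),
        if_neg (show ¬ ((j:ℕ) = k-1) by omega)]
termination_by n - k

lemma T_val {n : ℕ} (hn : 2 ≤ n) (x : Fin n → ℝ) (j : Fin n) :
    sB n 0 (blkB n 2 n (blkB n 1 n x)) j =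
      if (j:ℕ) < 2 then xval x ((j:ℕ) + n - 2) + 1 else xval x ((j:ℕ) - 2) := by
  have hjn := j.isLt
  have hy : ∀ (a : ℕ) (ha : a < n), blkB n 1 n x ⟨a, ha⟩ =
      if a = 0 then -(xval x (n-1)) else xval x (a-1) := by
    intro a ha
    rw [blk_top 1 le_rfl (by omega)]
    simp only [Fin.val_mk]
    by_cases h : a = 0
    · simp [h]
    · rw [if_neg (show ¬ (a = 1 - 1) by omega), if_pos (show 1 ≤ a by omega), if_neg h]
  have hz : ∀ (a : ℕ) (ha : a < n), blkB n 2 n (blkB n 1 n x) ⟨a, ha⟩ =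
      if a = 0 then -(xval x (n-1)) else if a = 1 then -(xval x (n-2))
      else xval x (a-2) := by
    intro a ha
    rw [blk_top 2 (by omega) (by omega)]
    simp only [Fin.val_mk]
    by_cases h1 : a = 1
    · rw [if_pos (show a = 2 - 1 by omega), if_neg (show ¬ (a = 0) by omega), if_pos h1]
      congr 1
      rw [xval_lt _ (show n - 1 < n by omega), hy (n-1) (by omega),
        if_neg (show ¬ (n-1 = 0) by omega)]
      congr 1 <;> omega
    · rw [if_neg (show ¬ (a = 2 - 1) by omega)]
      by_cases h0 : a = 0
      · rw [if_neg (show ¬ (2 ≤ a) by omega), if_pos h0, hy a ha, if_pos h0]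
      · rw [if_pos (show 2 ≤ a by omega), if_neg h0, if_neg h1,
          xval_lt _ (show a - 1 < n by omega), hy (a-1) (by omega),
          if_neg (show ¬ (a - 1 = 0) by omega)]
        congr 1 <;> omega
  have hsB0 : sB n 0 (blkB n 2 n (blkB n 1 n x)) j =
      if (j:ℕ) = 0 then 1 - xval (blkB n 2 n (blkB n 1 n x)) 1
      else if (j:ℕ) = 1 then 1 - xval (blkB n 2 n (blkB n 1 n x)) 0
      else blkB n 2 n (blkB n 1 n x) j := by
    simp [sB]
  rw [hsB0]
  have hz1 : xval (blkB n 2 n (blkB n 1 n x)) 1 = -(xval x (n-2)) := by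
    rw [xval_lt _ (show 1 < n by omega), hz 1 (by omega)]
    norm_num
  have hz0 : xval (blkB n 2 n (blkB n 1 n x)) 0 = -(xval x (n-1)) := by
    rw [xval_lt _ (show 0 < n by omega), hz 0 (by omega)]
    norm_num
  by_cases h0 : (j:ℕ) = 0
  · rw [if_pos h0, if_pos (show (j:ℕ) < 2 by omega), hz1]
    have : (j:ℕ) + n - 2 = n - 2 := by omega
    rw [this]
    ring
  · by_cases h1 : (j:ℕ) = 1
    · rw [if_neg h0, if_pos h1, if_pos (show (j:ℕ) < 2 by omega), hz0]
      have : (j:ℕ) + n - 2 = n - 1 := by omega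
      rw [this]
      ring
    · rw [if_neg h0, if_neg h1, if_neg (show ¬ ((j:ℕ) < 2) by omega)]
      have : blkB n 2 n (blkB n 1 n x) j = blkB n 2 n (blkB n 1 n x) ⟨(j:ℕ), hjn⟩ := rfl
      rw [this, hz (j:ℕ) hjn, if_neg h0, if_neg h1]

lemma T_iter {n : ℕ} (hn : 2 ≤ n) (m : ℕ) (hm : 2*m ≤ n) (x : Fin n → ℝ) (j : Fin n) :
    (sB n 0 ∘ blkB n 2 n ∘ blkB n 1 n)^[m] x j =
      if (j:ℕ) < 2*m then xval x ((j:ℕ) + n - 2*m) + 1 else xval x ((j:ℕ) - 2*m) := by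
  have hjn := j.isLt
  induction m generalizing j with
  | zero => simp [xval_val]
  | succ m ih =>
    rw [Function.iterate_succ_apply', Function.comp_apply, Function.comp_apply,
      T_val hn]
    have hm' : 2*m ≤ n := by omega
    by_cases h2 : (j:ℕ) < 2
    · rw [if_pos h2]
      have ha : (j:ℕ) + n - 2 < n := by omega
      rw [xval_lt _ ha, ih hm' ⟨_, ha⟩ ha]
      simp only [Fin.val_mk]
      rw [if_neg (show ¬ ((j:ℕ) + n - 2 < 2*m) by omega),
        if_pos (show (j:ℕ) < 2*(m+1) by omega)]
      have : (j:ℕ) + n - 2 - 2*m = (j:ℕ) + n - 2*(m+1) := by omega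
      rw [this]
    · rw [if_neg h2]
      have ha : (j:ℕ) - 2 < n := by omega
      rw [xval_lt _ ha, ih hm' ⟨_, ha⟩ ha]
      simp only [Fin.val_mk]
      by_cases h3 : (j:ℕ) - 2 < 2*m
      · rw [if_pos h3, if_pos (show (j:ℕ) < 2*(m+1) by omega)]
        have : (j:ℕ) - 2 + n - 2*m = (j:ℕ) + n - 2*(m+1) := by omega
        rw [this]
      · rw [if_neg h3, if_neg (show ¬ ((j:ℕ) < 2*(m+1)) by omega)]
        have : (j:ℕ) - 2 - 2*m = (j:ℕ) - 2*(m+1) := by omega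
        rw [this]

lemma trail_partial {n i : ℕ} (hi1 : 1 ≤ i) (hin : i ≤ n) (m : ℕ) (hm : m ≤ n - i)
    (x : Fin n → ℝ) (j : Fin n) :
    ((List.range' 1 m).reverse).foldr (fun a f => blkB n a (a + i - 1) ∘ f) id x j =
      if (j:ℕ) < m then xval x ((j:ℕ) + i)
      else if (j:ℕ) < m + i then xval x ((j:ℕ) - m) else x j := by
  have hjn := j.isLt
  induction m generalizing j with
  | zero =>
    simp only [List.range', List.reverse_nil, List.foldr_nil, id_eq, Nat.not_lt_zero,
      if_false, Nat.zero_add, Nat.sub_zero, xval_val]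
    split_ifs <;> rfl
  | succ m ih =>
    rw [List.range'_concat, List.reverse_append]
    simp only [one_mul, List.reverse_cons, List.reverse_nil, List.nil_append,
      List.singleton_append, List.foldr_cons, Function.comp_apply]
    rw [blk_mid (1+m) (1+m+i-1) (by omega) (by omega) (by omega)]
    have ihy : ∀ (a : ℕ) (ha : a < n),
        ((List.range' 1 m).reverse).foldr (fun a f => blkB n a (a + i - 1) ∘ f) id x ⟨a, ha⟩ =
        if a < m then xval x (a + i) else if a < m + i then xval x (a - m)
        else x ⟨a, ha⟩ := by
      intro a ha
      rw [ih (by omega) ⟨a, ha⟩ ha]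
    rcases lt_trichotomy ((j:ℕ)) m with h | h | h
    · rw [if_neg (show ¬ ((j:ℕ) = 1+m-1) by omega),
        if_neg (show ¬ (1+m ≤ (j:ℕ) ∧ (j:ℕ) ≤ 1+m+i-1) by omega)]
      have : ((List.range' 1 m).reverse).foldr (fun a f => blkB n a (a + i - 1) ∘ f) id x j
          = ((List.range' 1 m).reverse).foldr (fun a f => blkB n a (a + i - 1) ∘ f) id x
            ⟨(j:ℕ), hjn⟩ := rfl
      rw [this, ihy (j:ℕ) hjn, if_pos h, if_pos (show (j:ℕ) < m + 1 by omega)]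
    · rw [if_pos (show (j:ℕ) = 1+m-1 by omega)]
      have hmi : 1+m+i-1 < n := by omega
      rw [xval_lt _ hmi, ihy (1+m+i-1) hmi,
        if_neg (show ¬ (1+m+i-1 < m) by omega),
        if_neg (show ¬ (1+m+i-1 < m + i) by omega),
        if_pos (show (j:ℕ) < m + 1 by omega),
        xval_lt x (show (j:ℕ) + i < n by omega)]
      exact congrArg x (Fin.ext (by simp; omega))
    · by_cases hle : (j:ℕ) ≤ 1+m+i-1
      · rw [if_neg (show ¬ ((j:ℕ) = 1+m-1) by omega),
          if_pos (show 1+m ≤ (j:ℕ) ∧ (j:ℕ) ≤ 1+m+i-1 by omega)]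
        have hb : (j:ℕ) - 1 < n := by omega
        rw [xval_lt _ hb, ihy ((j:ℕ)-1) hb,
          if_neg (show ¬ ((j:ℕ)-1 < m) by omega),
          if_pos (show (j:ℕ)-1 < m + i by omega),
          if_neg (show ¬ ((j:ℕ) < m+1) by omega),
          if_pos (show (j:ℕ) < m+1+i by omega)]
        congr 1
        omega
      · rw [if_neg (show ¬ ((j:ℕ) = 1+m-1) by omega),
          if_neg (show ¬ (1+m ≤ (j:ℕ) ∧ (j:ℕ) ≤ 1+m+i-1) by omega)]
        have : ((List.range' 1 m).reverse).foldr (fun a f => blkB n a (a + i - 1) ∘ f) id x j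
            = ((List.range' 1 m).reverse).foldr (fun a f => blkB n a (a + i - 1) ∘ f) id x
              ⟨(j:ℕ), hjn⟩ := rfl
        rw [this, ihy (j:ℕ) hjn, if_neg (show ¬ ((j:ℕ) < m) by omega),
          if_neg (show ¬ ((j:ℕ) < m + i) by omega),
          if_neg (show ¬ ((j:ℕ) < m+1) by omega),
          if_neg (show ¬ ((j:ℕ) < m+1+i) by omega)]

lemma trail_val {n i : ℕ} (hi1 : 1 ≤ i) (hin : i ≤ n) (x : Fin n → ℝ) (j : Fin n) :
    trailB n i x j = if (j:ℕ) < n - i then xval x ((j:ℕ) + i)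
      else if (j:ℕ) < (n-i) + i then xval x ((j:ℕ) - (n-i)) else x j :=
  trail_partial hi1 hin (n-i) le_rfl x j

/-- In type `B_n^{(1)}`, for even `i` with `2 ≤ i ≤ n`,
`(s₀ ∘ [2,n] ∘ [1,n])^{i/2} ∘ [n−i,n−1] ∘ ⋯ ∘ [1,i]` is the translation by `e₁ + ⋯ + e_i`. -/
theorem statement0 (n i : ℕ) (hn : 2 ≤ n) (hi2 : 2 ≤ i) (hin : i ≤ n) (hi : Even i) :
    (sB n 0 ∘ blkB n 2 n ∘ blkB n 1 n)^[i / 2] ∘ trailB n i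
      = fun x => x + (fun (k : Fin n) => if (k : ℕ) < i then (1 : ℝ) else 0) := by
  funext x k
  have hkn := k.isLt
  have hm2 : 2 * (i/2) = i := by
    have := Nat.even_iff.mp hi
    omega
  simp only [Function.comp_apply, Pi.add_apply]
  rw [T_iter hn (i/2) (by omega), hm2]
  by_cases hk : (k:ℕ) < i
  · rw [if_pos hk, if_pos hk]
    have ha : (k:ℕ) + n - i < n := by omega
    rw [xval_lt _ ha]
    have : trailB n i x ⟨(k:ℕ) + n - i, ha⟩ = x k := by
      rw [trail_val (by omega) hin,
        if_neg (show ¬ (((⟨(k:ℕ)+n-i, ha⟩ : Fin n) : ℕ) < n - i) by simp; omega),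
        if_pos (show (((⟨(k:ℕ)+n-i, ha⟩ : Fin n) : ℕ)) < (n-i)+i by simp; omega),
        xval_lt x (show (((⟨(k:ℕ)+n-i, ha⟩ : Fin n) : ℕ)) - (n-i) < n by simp; omega)]
      exact congrArg x (Fin.ext (by simp; omega))
    rw [this]
  · rw [if_neg hk, if_neg hk]
    have ha : (k:ℕ) - i < n := by omega
    rw [xval_lt _ ha]
    have : trailB n i x ⟨(k:ℕ) - i, ha⟩ = x k := by
      rw [trail_val (by omega) hin,
        if_pos (show (((⟨(k:ℕ)-i, ha⟩ : Fin n) : ℕ)) < n - i by simp; omega),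
        xval_lt x (show (((⟨(k:ℕ)-i, ha⟩ : Fin n) : ℕ)) + i < n by simp; omega)]
      exact congrArg x (Fin.ext (by simp; omega))
    rw [this]
    ring

end
end

section
/- Let n ≥ 2 and 1 ≤ i ≤ n−1. Then, as maps ℝ^n → ℝ^n, (s_0 ∘ [1,n])^i ∘ [n−i, n−1] ∘ [n−i−1, n−2] ∘ ⋯ ∘ [1, i] = t_{e_1+e_2+⋯+e_i}, where the trailing product consists of the blocks [k, k+i−1] for k = n−i, …, 1. In other words, the element ω_i = (s_0[1,n])^i[n−i,n−1]⋯[2,i+1][1,i] of the extended affine Weyl group of type C_n^{(1)} acts on ℝ^n as translation by e_1+⋯+e_i. -/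
noncomputable section

/-- The simple affine reflections of type `C_n^{(1)}` acting on `ℝ^n`:
for `1 ≤ j ≤ n-1`, `sC n j` swaps the `j`-th and `(j+1)`-th coordinates (1-indexed);
`sC n n` negates the last coordinate; `sC n 0` is `x ↦ (1 - x₁, x₂, …, xₙ)`. -/
def sC (n : ℕ) (j : ℕ) (x : Fin n → ℝ) (k : Fin n) : ℝ :=
  if j = 0 then
    if (k : ℕ) = 0 then 1 - x k else x k
  else if j = n then
    if (k : ℕ) = n - 1 then -x k else x k
  else
    if (k : ℕ) = j - 1 then xval x j
    else if (k : ℕ) = j then xval x (j - 1)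
    else x k

/-- The block `[k,l] = s_k ∘ s_{k+1} ∘ ⋯ ∘ s_l` (rightmost factor applied first). -/
def blkC (n k l : ℕ) : (Fin n → ℝ) → (Fin n → ℝ) :=
  (List.range' k (l + 1 - k)).foldr (fun j f => sC n j ∘ f) id

/-- The trailing product `[n−i,n−1] ∘ [n−i−1,n−2] ∘ ⋯ ∘ [1,i]`,
consisting of the blocks `[k, k+i−1]` for `k = n−i, n−i−1, …, 1`. -/
def trailC (n i : ℕ) : (Fin n → ℝ) → (Fin n → ℝ) :=
  ((List.range' 1 (n - i)).reverse).foldr (fun m f => blkC n m (m + i - 1) ∘ f) id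

/-! ### Auxiliary lemmas -/

lemma xval_eq {n : ℕ} (x : Fin n → ℝ) (m : ℕ) (h : m < n) : xval x m = x ⟨m, h⟩ := dif_pos h

lemma foldr_comp (n : ℕ) (l : List ℕ) (e : (Fin n → ℝ) → (Fin n → ℝ)) :
    l.foldr (fun j f => sC n j ∘ f) e = (l.foldr (fun j f => sC n j ∘ f) id) ∘ e := by
  induction l with
  | nil => rfl
  | cons a l ih => simp only [List.foldr_cons, ih]; rfl

lemma sC_mid (n j : ℕ) (hn : 2 ≤ n) (h1 : 1 ≤ j) (h2 : j ≤ n - 1) (x : Fin n → ℝ) (k : Fin n) :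
    sC n j x k = if (k : ℕ) = j - 1 then xval x j
      else if (k : ℕ) = j then xval x (j - 1) else x k := by
  have hj0 : j ≠ 0 := by omega
  have hjn : j ≠ n := by omega
  simp only [sC, if_neg hj0, if_neg hjn]

lemma blk_apply (n : ℕ) (hn : 2 ≤ n) : ∀ d k, 1 ≤ k → k + d ≤ n - 1 →
    ∀ (x : Fin n → ℝ) (m : Fin n),
    blkC n k (k + d) x m =
      if (m : ℕ) = k - 1 then xval x (k + d)
      else if k ≤ (m : ℕ) ∧ (m : ℕ) ≤ k + d then xval x ((m : ℕ) - 1)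
      else x m := by
  intro d
  induction d with
  | zero =>
    intro k hk hkn x m
    have h1 : k + 0 + 1 - k = 1 := by omega
    have hb : blkC n k (k + 0) x = sC n k x := by
      unfold blkC; rw [h1]
      simp [List.range']
    rw [hb, sC_mid n k hn hk (by omega)]
    simp only [xval, Fin.val_mk]
    split_ifs <;> first | rfl | omega | (congr 1; exact Fin.ext (by simp only [Fin.val_mk]; omega))
  | succ d ih =>
    intro k hk hkn x m
    have hr : k + (d + 1) + 1 - k = d + 2 := by omega
    have hr2 : k + 1 + d + 1 - (k + 1) = d + 1 := by omega
    have hb : blkC n k (k + (d + 1)) x = sC n k (blkC n (k + 1) (k + 1 + d) x) := by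
      unfold blkC; rw [hr, hr2, List.range'_succ]
      rfl
    set y := blkC n (k + 1) (k + 1 + d) x with hy
    have hyv : ∀ m : Fin n, y m =
        if (m : ℕ) = (k + 1) - 1 then xval x (k + 1 + d)
        else if k + 1 ≤ (m : ℕ) ∧ (m : ℕ) ≤ k + 1 + d then xval x ((m : ℕ) - 1)
        else x m := ih (k + 1) (by omega) (by omega) x
    rw [hb, sC_mid n k hn hk (by omega)]
    rw [xval_eq y k (by omega), xval_eq y (k - 1) (by omega), hyv, hyv, hyv]
    simp only [xval, Fin.val_mk]
    split_ifs <;> first | rfl | omega | (congr 1; exact Fin.ext (by simp only [Fin.val_mk]; omega))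

lemma blk_top_apply (n : ℕ) (hn : 2 ≤ n) (x : Fin n → ℝ) (m : Fin n) :
    blkC n 1 n x m = if (m : ℕ) = 0 then -xval x (n - 1) else xval x ((m : ℕ) - 1) := by
  have hnn : n ≠ 0 := by omega
  have hyv : ∀ k : Fin n, sC n n x k = if (k : ℕ) = n - 1 then -x k else x k := by
    intro k; simp [sC, hnn]
  have hb : blkC n 1 n x = blkC n 1 (1 + (n - 2)) (sC n n x) := by
    unfold blkC
    have h1 : n + 1 - 1 = (n - 1) + 1 := by omega
    have h2 : 1 + 1 * (n - 1) = n := by omega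
    have h3 : 1 + (n - 2) + 1 - 1 = n - 1 := by omega
    rw [h1, List.range'_concat, h2, List.foldr_append, foldr_comp, h3]
    rfl
  rw [hb, blk_apply n hn (n - 2) 1 le_rfl (by omega) (sC n n x) m]
  have hmlt : (m : ℕ) < n := m.isLt
  by_cases hm0 : (m : ℕ) = 0
  · rw [if_pos (by omega : (m : ℕ) = 1 - 1), if_pos hm0]
    rw [xval_eq (sC n n x) (1 + (n - 2)) (by omega), hyv]
    rw [if_pos (by simp only [Fin.val_mk]; omega)]
    rw [xval_eq x (n - 1) (by omega)]
    congr 1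
    exact congrArg x (Fin.ext (by simp only [Fin.val_mk]; omega))
  · rw [if_neg (by omega : ¬ (m : ℕ) = 1 - 1), if_pos (by omega), if_neg hm0]
    rw [xval_eq (sC n n x) ((m : ℕ) - 1) (by omega), hyv]
    rw [if_neg (by simp only [Fin.val_mk]; omega)]
    rw [xval_eq x ((m : ℕ) - 1) (by omega)]

lemma A_apply (n : ℕ) (hn : 2 ≤ n) (x : Fin n → ℝ) (m : Fin n) :
    (sC n 0 ∘ blkC n 1 n) x m =
      (if (m : ℕ) = 0 then 1 else 0) + xval x (((m : ℕ) + (n - 1)) % n) := by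
  have hy := blk_top_apply n hn x m
  have hmlt : (m : ℕ) < n := m.isLt
  by_cases hm0 : (m : ℕ) = 0
  · have hmod : ((m : ℕ) + (n - 1)) % n = n - 1 := by
      rw [hm0, Nat.zero_add, Nat.mod_eq_of_lt (by omega)]
    simp only [Function.comp_apply] at *
    simp [sC, hm0, hy, hmod]
  · have hmod : ((m : ℕ) + (n - 1)) % n = (m : ℕ) - 1 := by
      have h1 : (m : ℕ) + (n - 1) = ((m : ℕ) - 1) + n := by omega
      rw [h1, Nat.add_mod_right, Nat.mod_eq_of_lt (by omega)]
    simp only [Function.comp_apply] at *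
    simp [sC, hm0, hy, hmod]

lemma A_iter (n : ℕ) (hn : 2 ≤ n) : ∀ i ≤ n, ∀ (x : Fin n → ℝ) (m : Fin n),
    (sC n 0 ∘ blkC n 1 n)^[i] x m =
      (if (m : ℕ) < i then 1 else 0) + xval x (((m : ℕ) + i * (n - 1)) % n) := by
  intro i
  induction i with
  | zero =>
    intro _ x m
    simp [Nat.mod_eq_of_lt m.isLt, xval_eq x m m.isLt]
  | succ i ih =>
    intro hi x m
    rw [Function.iterate_succ, Function.comp_apply]
    set y := (sC n 0 ∘ blkC n 1 n) x with hydef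
    rw [ih (by omega) y m]
    set p := ((m : ℕ) + i * (n - 1)) % n with hp
    have hpn : p < n := Nat.mod_lt _ (by omega)
    have hkey : (p + i) % n = (m : ℕ) := by
      rw [hp, Nat.mod_add_mod]
      have h1 : (m : ℕ) + i * (n - 1) + i = (m : ℕ) + i * n := by
        have h3 : i * (n - 1) + i = i * n := by
          have h2 : n - 1 + 1 = n := by omega
          calc i * (n - 1) + i = i * ((n - 1) + 1) := by ring
            _ = i * n := by rw [h2]
        omega
      rw [h1, Nat.add_mul_mod_self_right, Nat.mod_eq_of_lt m.isLt]
    have hiff : p = 0 ↔ (m : ℕ) = i := by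
      constructor
      · intro h0
        rw [h0] at hkey
        simpa [Nat.mod_eq_of_lt (by omega : i < n)] using hkey.symm
      · intro hmi
        rcases lt_or_ge (p + i) n with h | h
        · rw [Nat.mod_eq_of_lt h] at hkey; omega
        · rw [Nat.mod_eq_sub_mod h, Nat.mod_eq_of_lt (by omega)] at hkey; omega
    rw [xval_eq y p hpn, hydef, A_apply n hn x ⟨p, hpn⟩]
    have hfin : (((⟨p, hpn⟩ : Fin n) : ℕ)) = p := rfl
    rw [hfin]
    have hidx : (p + (n - 1)) % n = ((m : ℕ) + (i + 1) * (n - 1)) % n := by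
      rw [hp, Nat.mod_add_mod]
      congr 1
      ring
    rw [hidx]
    have hcnt : (if (m : ℕ) < i then (1:ℝ) else 0) + (if p = 0 then (1:ℝ) else 0)
        = if (m : ℕ) < i + 1 then 1 else 0 := by
      by_cases hmi : (m : ℕ) = i
      · rw [if_pos (hiff.mpr hmi), if_neg (by omega), if_pos (by omega)]; ring
      · rw [if_neg (fun h => hmi (hiff.mp h))]
        by_cases hlt : (m : ℕ) < i
        · rw [if_pos hlt, if_pos (by omega)]; ring
        · rw [if_neg hlt, if_neg (by omega)]; ring
    rw [← hcnt]; ring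

/-- Partial trailing product: blocks `[t,t+i-1] ∘ ⋯ ∘ [1,i]`. -/
def gC (n i t : ℕ) : (Fin n → ℝ) → (Fin n → ℝ) :=
  ((List.range' 1 t).reverse).foldr (fun m f => blkC n m (m + i - 1) ∘ f) id

lemma trailC_eq_gC (n i : ℕ) : trailC n i = gC n i (n - i) := rfl

lemma gC_apply (n i : ℕ) (hn : 2 ≤ n) (hi1 : 1 ≤ i) (hin : i ≤ n - 1) :
    ∀ t, t ≤ n - i → ∀ (x : Fin n → ℝ) (m : Fin n),
    gC n i t x m =
      if (m : ℕ) < t then xval x ((m : ℕ) + i)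
      else if (m : ℕ) < t + i then xval x ((m : ℕ) - t)
      else x m := by
  intro t
  induction t with
  | zero =>
    intro _ x m
    have h0 : gC n i 0 x m = x m := rfl
    rw [h0, if_neg (by omega)]
    by_cases h : (m : ℕ) < 0 + i
    · rw [if_pos h, xval_eq x ((m : ℕ) - 0) (by omega)]
      exact congrArg x (Fin.ext (by simp only [Fin.val_mk]; omega))
    · rw [if_neg h]
  | succ t ih =>
    intro ht x m
    have hb : gC n i (t + 1) x = blkC n (1 + t) (1 + t + i - 1) (gC n i t x) := by
      unfold gC
      rw [List.range'_concat]
      simp only [List.reverse_append, List.reverse_cons, List.reverse_nil, List.nil_append,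
        List.singleton_append, List.foldr_cons]
      simp [mul_one]
    set y := gC n i t x with hy
    have hyv : ∀ m : Fin n, y m =
        if (m : ℕ) < t then xval x ((m : ℕ) + i)
        else if (m : ℕ) < t + i then xval x ((m : ℕ) - t)
        else x m := ih (by omega) x
    have h1t : (1 : ℕ) + t = t + 1 := by omega
    have hl : t + 1 + i - 1 = t + 1 + (i - 1) := by omega
    rw [hb, h1t, hl]
    have hblk := blk_apply n hn (i - 1) (t + 1) (by omega) (by omega) y m
    rw [hblk]
    have hti : (t + 1) + (i - 1) = t + i := by omega
    rw [hti]
    by_cases h1 : (m : ℕ) = t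
    · rw [if_pos (by omega), if_pos (by omega)]
      rw [xval_eq y (t + i) (by omega), hyv]
      simp only [Fin.val_mk]
      rw [if_neg (by omega), if_neg (by omega)]
      rw [xval_eq x ((m : ℕ) + i) (by omega)]
      exact congrArg x (Fin.ext (by simp only [Fin.val_mk]; omega))
    · rw [if_neg (by omega)]
      by_cases h2 : t + 1 ≤ (m : ℕ) ∧ (m : ℕ) ≤ t + i
      · rw [if_pos h2]
        rw [xval_eq y ((m : ℕ) - 1) (by omega), hyv]
        simp only [Fin.val_mk]
        by_cases h3 : (m : ℕ) - 1 < t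
        · -- m - 1 < t and m ≥ t+1 and m ≠ t: impossible since m ≥ t+1 → m-1 ≥ t
          omega
        · rw [if_neg h3]
          rw [if_pos (by omega)]
          rw [if_neg (by omega), if_pos (by omega)]
          rw [xval_eq x ((m : ℕ) - 1 - t) (by omega), xval_eq x ((m : ℕ) - (t + 1)) (by omega)]
          congr 1; exact Fin.ext (by simp; omega)
      · rw [if_neg h2, hyv]
        by_cases h4 : (m : ℕ) < t
        · rw [if_pos h4, if_pos (by omega)]
        · rw [if_neg h4, if_neg (by omega), if_neg (by omega), if_neg (by omega)]

/-- In type `C_n^{(1)}`, for `1 ≤ i ≤ n−1`,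
`(s₀ ∘ [1,n])^i ∘ [n−i,n−1] ∘ ⋯ ∘ [1,i]` is the translation by `e₁ + ⋯ + e_i`. -/
theorem statement3 (n i : ℕ) (hn : 2 ≤ n) (hi1 : 1 ≤ i) (hin : i ≤ n - 1) :
    (sC n 0 ∘ blkC n 1 n)^[i] ∘ trailC n i
      = fun x => x + (fun (k : Fin n) => if (k : ℕ) < i then (1 : ℝ) else 0) := by
  funext x m
  rw [Function.comp_apply]
  rw [A_iter n hn i (by omega) (trailC n i x) m]
  have hpn : ((m : ℕ) + i * (n - 1)) % n < n := Nat.mod_lt _ (by omega)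
  have hkey : (((m : ℕ) + i * (n - 1)) % n + i) % n = (m : ℕ) := by
    rw [Nat.mod_add_mod]
    have h1 : (m : ℕ) + i * (n - 1) + i = (m : ℕ) + i * n := by
      have h3 : i * (n - 1) + i = i * n := by
        have h2 : n - 1 + 1 = n := by omega
        calc i * (n - 1) + i = i * ((n - 1) + 1) := by ring
          _ = i * n := by rw [h2]
      omega
    rw [h1, Nat.add_mul_mod_self_right, Nat.mod_eq_of_lt m.isLt]
  generalize hpgen : ((m : ℕ) + i * (n - 1)) % n = p at hkey hpn ⊢
  have hyv := gC_apply n i hn hi1 hin (n - i) le_rfl x ⟨p, hpn⟩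
  simp only [Fin.val_mk] at hyv
  rw [xval_eq (trailC n i x) p hpn, trailC_eq_gC, hyv]
  have hrhs : (x + fun (k : Fin n) => if (k : ℕ) < i then (1 : ℝ) else 0) m
      = x m + (if (m : ℕ) < i then (1 : ℝ) else 0) := rfl
  rw [hrhs]
  by_cases h1 : p < n - i
  · rw [if_pos h1]
    have hpi : p + i < n := by omega
    rw [Nat.mod_eq_of_lt hpi] at hkey
    rw [xval_eq x (p + i) hpi]
    have he : (⟨p + i, hpi⟩ : Fin n) = m := Fin.ext hkey
    rw [he]; ring
  · rw [if_neg h1, if_pos (show p < n - i + i by omega)]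
    have hge : n ≤ p + i := by omega
    rw [Nat.mod_eq_sub_mod hge, Nat.mod_eq_of_lt (by omega)] at hkey
    rw [xval_eq x (p - (n - i)) (by omega)]
    have he : (⟨p - (n - i), by omega⟩ : Fin n) = m := Fin.ext (by simp only [Fin.val_mk]; omega)
    rw [he]; ring

end
end

section
/- Let k ≥ 1 and let (y_1, …, y_k) be an almost commuting tuple of elements of an associative algebra A (i.e. y_m·y_l = y_l·y_m whenever |m−l| > 1). Then P_k(y_1, …, y_k) = P'_k(y_1, …, y_k). -/
/-! A single `q`-bracket reassociates, `[x, [w, z]_q]_q = [[x, w]_q, z]_q`, as soon as `x` and `z`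
commute. In an almost commuting tuple `y₁` commutes with `y₃, …, y_k`, so it can be pushed through
the left-nested bracket `P'_{k-1}(y₂, …, y_k)` one factor at a time; induction on `k` then
identifies the right-nested and the left-nested brackets. -/

section

variable {R : Type*} [CommRing R] {A : Type*} [Ring A] [Algebra R A]

/-- The `q`-bracket `[x,y]_q = x·y − q·y·x`. -/
def qbr (q : R) (x y : A) : A := x * y - q • (y * x)

/-- The polynomial `P_k(y_1, …, y_k)`, defined recursively by `P_1(y_1) = y_1` and
`P_{k+1}(y_1,…,y_{k+1}) = P_k(y_1,…,y_{k−1},[y_k,y_{k+1}]_q)`; equivalently, the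
right-nested iterated `q`-bracket `[y_1, [y_2, [… , [y_{k−1}, y_k]_q … ]_q]_q]_q`. -/
def Ppol (q : R) : List A → A
  | [] => 0
  | [y] => y
  | y :: l => qbr q y (Ppol q l)

/-- The polynomial `P'_k(y_1, …, y_k)`, defined recursively by `P'_1(y_1) = y_1` and
`P'_{k+1}(y_1,…,y_{k+1}) = [P'_k(y_1,…,y_k), y_{k+1}]_q`; i.e. the left-nested
iterated `q`-bracket. -/
def Ppol' (q : R) : List A → A
  | [] => 0
  | y :: l => l.foldl (qbr q) y

theorem qbr_qbr_of_commute (q : R) {x z : A} (h : Commute x z) (w : A) :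
    qbr q x (qbr q w z) = qbr q (qbr q x w) z := by
  simp only [qbr, mul_sub, sub_mul, smul_sub, mul_smul_comm, smul_mul_assoc, smul_smul,
    mul_assoc]
  rw [h.left_comm, h.eq]
  abel

theorem qbr_foldl_of_forall_commute (q : R) {x : A} {l : List A} (h : ∀ a ∈ l, Commute x a)
    (w : A) : qbr q x (l.foldl (qbr q) w) = l.foldl (qbr q) (qbr q x w) := by
  induction l generalizing w with
  | nil => rfl
  | cons a l ih =>
    rw [List.foldl_cons, List.foldl_cons, ih (fun b hb => h b (List.mem_cons_of_mem a hb)),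
      qbr_qbr_of_commute q (h a List.mem_cons_self)]

theorem statement15_general (q : R) (ys : List A)
    (hcomm : ∀ m l : Fin ys.length, ((m : ℕ) + 1 < (l : ℕ) ∨ (l : ℕ) + 1 < (m : ℕ)) →
      ys.get m * ys.get l = ys.get l * ys.get m) :
    Ppol q ys = Ppol' q ys := by
  induction ys with
  | nil => rfl
  | cons y l ih =>
    rcases l with _ | ⟨z, t⟩
    · rfl
    have htail : Ppol q (z :: t) = Ppol' q (z :: t) :=
      ih fun m l hml => by simpa using hcomm m.succ l.succ (by simpa using hml)
    have hhead : ∀ a ∈ t, Commute y a := by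
      intro a ha
      obtain ⟨i, rfl⟩ := List.mem_iff_get.mp ha
      simpa [Commute, SemiconjBy] using hcomm ⟨0, by simp⟩ ⟨i + 2, by simp⟩ (by simp)
    calc Ppol q (y :: z :: t) = qbr q y (Ppol' q (z :: t)) := by rw [← htail]; rfl
      _ = Ppol' q (y :: z :: t) := qbr_foldl_of_forall_commute q hhead z

/-- If `(y_1, …, y_k)` is an almost commuting tuple (i.e. `y_m·y_l = y_l·y_m` whenever
`|m − l| > 1`), then `P_k(y_1, …, y_k) = P'_k(y_1, …, y_k)`. -/
theorem statement15 (q : R) (ys : List A) (hne : ys ≠ [])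
    (hcomm : ∀ m l : Fin ys.length, ((m : ℕ) + 1 < (l : ℕ) ∨ (l : ℕ) + 1 < (m : ℕ)) →
      ys.get m * ys.get l = ys.get l * ys.get m) :
    Ppol q ys = Ppol' q ys :=
  statement15_general q ys hcomm

end
end

section
/- Let k ≥ 2, let (y_1, …, y_k) be a tuple of elements of an associative R-algebra A, and suppose that y_m·y_{m+1} = y_{m+1}·y_m for some 1 ≤ m ≤ k−1. Then P_k(y_1, …, y_{m−1}, y_m, y_{m+1}, y_{m+2}, …, y_k) = P_k(y_1, …, y_{m−1}, y_{m+1}, y_m, y_{m+2}, …, y_k); that is, P_k is unchanged upon swapping the two commuting adjacent arguments. -/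
section

variable {R : Type*} [CommRing R] {A : Type*} [Ring A] [Algebra R A]

lemma Ppol_cons (q : R) (x : A) (l : List A) (hl : l ≠ []) :
    Ppol q (x :: l) = qbr q x (Ppol q l) := by
  cases l with
  | nil => exact absurd rfl hl
  | cons y t => rfl

lemma qbr_swap (q : R) (a b P : A) (h : a * b = b * a) :
    qbr q a (qbr q b P) = qbr q b (qbr q a P) := by
  simp only [qbr, mul_sub, sub_mul, smul_mul_assoc, mul_smul_comm, smul_sub, smul_smul,
    ← mul_assoc]
  rw [h, mul_assoc P a b, h, ← mul_assoc]
  abel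

lemma swap_head (q : R) (l₂ : List A) (a b : A) (h : a * b = b * a) :
    Ppol q (a :: b :: l₂) = Ppol q (b :: a :: l₂) := by
  cases l₂ with
  | nil =>
    show qbr q a b = qbr q b a
    simp [qbr, h]
  | cons y t =>
    rw [Ppol_cons q a _ (by simp), Ppol_cons q b (a :: y :: t) (by simp),
      Ppol_cons q b (y :: t) (by simp), Ppol_cons q a (y :: t) (by simp),
      qbr_swap q a b _ h]

/-- `P_k` is unchanged upon swapping two commuting adjacent arguments:
if `a·b = b·a` then `P(…, a, b, …) = P(…, b, a, …)`. -/
theorem statement17 (q : R) (l₁ l₂ : List A) (a b : A) (h : a * b = b * a) :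
    Ppol q (l₁ ++ a :: b :: l₂) = Ppol q (l₁ ++ b :: a :: l₂) := by
  induction l₁ with
  | nil => exact swap_head q l₂ a b h
  | cons x t ih =>
    rw [List.cons_append, List.cons_append,
      Ppol_cons q x _ (by simp), Ppol_cons q x _ (by simp), ih]

end
end
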